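/- Let 𝓘 : Fin m → Finset ℕ be an abstract network, (T,ι) a contraction tree for 𝓘 of rank r and height H, Λ a feasibility assignment on the leaves of T, ε > 0 a real number, and Λ̂ an ε-simulation of Λ on (T,ι). Assume that every tensor in every set Λ̂(u) has all entries of modulus at most 1, that for every node u, every partial simulation λ̂ of Λ rooted at u, and every node u' of T[u], the tensor λ̂(u') has all entries of modulus at most 1, and that ε·(3·d^{2r}+1)^H ≤ 1. Then for every node u of T and every tensor g ∈ Λ̂(u), there exists a partial simulation λ̂ of Λ rooted at u with ‖λ̂(u) − g‖ ≤ ε·(3·d^{2r}+1)^{height(u)}, where height(u) denotes the height of the subtree T[u]. -/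

import Mathlib

/-- Rooted binary trees in which every internal node has exactly two children,
with leaves labeled by elements of `α`. -/
inductive BTree (α : Type) : Type
  | leaf (a : α) : BTree α
  | node (l r : BTree α) : BTree α

namespace BTree

variable {α : Type}

/-- The list of leaf labels of a binary tree. -/
def leaves : BTree α → List α
  | leaf a => [a]
  | node l r => l.leaves ++ r.leaves

/-- The height of a binary tree: maximum number of edges on a root-to-leaf path. -/
def height : BTree α → ℕ
  | leaf _ => 0
  | node l r => max l.height r.height + 1

/-- The list of all subtrees (i.e. nodes) of a binary tree. -/
def subtrees : BTree α → List (BTree α)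
  | leaf a => [leaf a]
  | node l r => node l r :: (l.subtrees ++ r.subtrees)

end BTree

/-- An abstract network: every index occurring in the family belongs to exactly
two members of the family. -/
def IsAbstractNetwork {m : ℕ} (I : Fin m → Finset ℕ) : Prop :=
  ∀ i : ℕ, (∃ j : Fin m, i ∈ I j) →
    (Finset.univ.filter fun j : Fin m => i ∈ I j).card = 2

/-- The index set `ι(u)` attached to the node `u` of a contraction tree for `I`. -/
def iota {m : ℕ} (I : Fin m → Finset ℕ) : BTree (Fin m) → Finset ℕ
  | .leaf j => I j
  | .node l r => symmDiff (iota I l) (iota I r)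

/-- `(T, ι)` is a contraction tree for the abstract network `I`: the leaves of `T` are
labeled bijectively with the members of the family, and at every internal node the
index sets of the two children intersect. -/
def IsContractionTree {m : ℕ} (I : Fin m → Finset ℕ) (T : BTree (Fin m)) : Prop :=
  T.leaves.Nodup ∧ (∀ j : Fin m, j ∈ T.leaves) ∧
  ∀ l r : BTree (Fin m), BTree.node l r ∈ T.subtrees →
    ((iota I l) ∩ (iota I r)).Nonempty

/-- The rank of the contraction tree `(T, ι)`: the maximum of `|ι(u)|` over nodes `u`. -/
def rankOf {m : ℕ} (I : Fin m → Finset ℕ) (T : BTree (Fin m)) : ℕ :=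
  (T.subtrees.map fun u => (iota I u).card).foldr max 0

/-- A `d`-state tensor, given by its entries on assignments of a pair of values in
`Fin d` to every possible index; a tensor *with index set* `I` is one whose entries
depend only on the values assigned to the indices in `I` (see `HasIndexSet`). -/
abbrev Tensor (d : ℕ) : Type := (ℕ → Fin d × Fin d) → ℂ

/-- `g` is a tensor with index set `I`: its entries depend only on the indices in `I`. -/
def HasIndexSet {d : ℕ} (g : Tensor d) (I : Finset ℕ) : Prop :=
  ∀ σ τ : ℕ → Fin d × Fin d, (∀ x ∈ I, σ x = τ x) → g σ = g τ

/-- The norm of a tensor: the supremum of the moduli of its entries. -/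
noncomputable def tnorm {d : ℕ} (g : Tensor d) : ℝ := ⨆ σ, ‖g σ‖

/-- The contraction of two tensors over the shared index set `L`. -/
noncomputable def contr {d : ℕ} (L : Finset ℕ) (g g' : Tensor d) : Tensor d :=
  fun σ => ∑ τ : ↥L → Fin d × Fin d,
    g (fun x => if h : x ∈ L then τ ⟨x, h⟩ else σ x) *
    g' (fun x => if h : x ∈ L then τ ⟨x, h⟩ else σ x)

/-- A partial simulation of the feasibility assignment `Λ` rooted at the node `u`:
an assignment of a tensor to each node of the subtree `T[u]` that picks a member of
`Λ` at each leaf and is the contraction of the children's tensors (over their shared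
index set) at each internal node. -/
def IsPartialSim {d m : ℕ} (I : Fin m → Finset ℕ) (Λ : Fin m → Finset (Tensor d))
    (u : BTree (Fin m)) (lam : BTree (Fin m) → Tensor d) : Prop :=
  (∀ j : Fin m, BTree.leaf j ∈ u.subtrees → lam (BTree.leaf j) ∈ Λ j) ∧
  (∀ l r : BTree (Fin m), BTree.node l r ∈ u.subtrees →
    lam (BTree.node l r) = contr ((iota I l) ∩ (iota I r)) (lam l) (lam r))

/-- An `ε`-simulation of the feasibility assignment `Λ` on the contraction tree `T`:
each node carries a finite set of tensors, agreeing with `Λ` at the leaves; at every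
internal node, every tensor of the node is `ε`-close to the contraction of some pair
of tensors of the children, and conversely the contraction of every pair of tensors
of the children is `ε`-close to some tensor of the node. -/
def IsEpsSim {d m : ℕ} (I : Fin m → Finset ℕ) (Λ : Fin m → Finset (Tensor d))
    (T : BTree (Fin m)) (ε : ℝ) (L : BTree (Fin m) → Finset (Tensor d)) : Prop :=
  (∀ j : Fin m, BTree.leaf j ∈ T.subtrees → L (BTree.leaf j) = Λ j) ∧
  (∀ l r : BTree (Fin m), BTree.node l r ∈ T.subtrees →
    (∀ g ∈ L (BTree.node l r), ∃ gl ∈ L l, ∃ gr ∈ L r,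
        tnorm (g - contr ((iota I l) ∩ (iota I r)) gl gr) ≤ ε) ∧
    (∀ gl ∈ L l, ∀ gr ∈ L r, ∃ g ∈ L (BTree.node l r),
        tnorm (g - contr ((iota I l) ∩ (iota I r)) gl gr) ≤ ε))

/-!
Induction on the node `u`. At a leaf the ε-simulation coincides with `Λ`, so `g` itself is a
partial simulation. At an internal node, `g` is ε-close to `Contr(g_l, g_r)` for some `g_l, g_r`
of the children, which by induction are approximated by partial simulations `λ̂_l, λ̂_r`; these
glue to a partial simulation at `u` because distinct leaves make the two subtrees disjoint.
Since all entries are bounded by `1` and contraction is bilinear, summing over at most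
`d^(2r)` values of the shared indices bounds the error at `u` by `d^(2r) (δ_l + δ_r) + ε`,
where `δ_l, δ_r` are the errors at the children; this recursion stays below
`ε (3 d^(2r) + 1)^height(u)`.
-/

namespace BTree

variable {α : Type}

theorem mem_subtrees_node {v l r : BTree α} :
    v ∈ (node l r).subtrees ↔ v = node l r ∨ v ∈ l.subtrees ∨ v ∈ r.subtrees := by
  simp [subtrees]

theorem self_mem_subtrees : ∀ t : BTree α, t ∈ t.subtrees
  | leaf _ => by simp [subtrees]
  | node _ _ => by simp [subtrees]

theorem mem_subtrees_trans {a b c : BTree α} (hab : a ∈ b.subtrees) (hbc : b ∈ c.subtrees) :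
    a ∈ c.subtrees := by
  induction c with
  | leaf x => simp_all [subtrees]
  | node l r ihl ihr =>
    rcases mem_subtrees_node.1 hbc with rfl | h | h
    · exact hab
    · exact mem_subtrees_node.2 (Or.inr (Or.inl (ihl h)))
    · exact mem_subtrees_node.2 (Or.inr (Or.inr (ihr h)))

theorem left_mem_subtrees_of_node_mem {l r t : BTree α} (h : node l r ∈ t.subtrees) :
    l ∈ t.subtrees :=
  mem_subtrees_trans (mem_subtrees_node.2 (Or.inr (Or.inl (self_mem_subtrees l)))) h

theorem right_mem_subtrees_of_node_mem {l r t : BTree α} (h : node l r ∈ t.subtrees) :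
    r ∈ t.subtrees :=
  mem_subtrees_trans (mem_subtrees_node.2 (Or.inr (Or.inr (self_mem_subtrees r)))) h

theorem leaves_ne_nil : ∀ t : BTree α, t.leaves ≠ []
  | leaf _ => by simp [leaves]
  | node l _ => by simp [leaves, leaves_ne_nil l]

theorem leaves_sublist_of_mem_subtrees {a t : BTree α} (h : a ∈ t.subtrees) :
    a.leaves.Sublist t.leaves := by
  induction t with
  | leaf x => simp_all [subtrees]
  | node l r ihl ihr =>
    rcases mem_subtrees_node.1 h with rfl | h | h
    · exact List.Sublist.refl _
    · exact (ihl h).trans (List.sublist_append_left _ _)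
    · exact (ihr h).trans (List.sublist_append_right _ _)

theorem node_notMem_subtrees_left (l r : BTree α) : node l r ∉ l.subtrees := fun h => by
  have hlen := (leaves_sublist_of_mem_subtrees h).length_le
  have hr := List.length_pos_of_ne_nil (leaves_ne_nil r)
  simp only [leaves, List.length_append] at hlen
  omega

theorem node_notMem_subtrees_right (l r : BTree α) : node l r ∉ r.subtrees := fun h => by
  have hlen := (leaves_sublist_of_mem_subtrees h).length_le
  have hl := List.length_pos_of_ne_nil (leaves_ne_nil l)
  simp only [leaves, List.length_append] at hlen
  omega

theorem notMem_subtrees_right_of_nodup {l r v : BTree α} (h : (node l r).leaves.Nodup)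
    (hv : v ∈ l.subtrees) : v ∉ r.subtrees := fun hv' => by
  obtain ⟨x, hx⟩ := List.exists_mem_of_ne_nil _ (leaves_ne_nil v)
  exact List.disjoint_of_nodup_append h ((leaves_sublist_of_mem_subtrees hv).subset hx)
    ((leaves_sublist_of_mem_subtrees hv').subset hx)

end BTree

theorem card_iota_le_rankOf {m : ℕ} (I : Fin m → Finset ℕ) {T u : BTree (Fin m)}
    (hu : u ∈ T.subtrees) : (iota I u).card ≤ rankOf I T :=
  List.le_max_of_le (List.mem_map_of_mem hu) le_rfl

section Tensor

variable {d : ℕ}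

theorem tnorm_nonneg (g : Tensor d) : 0 ≤ tnorm g :=
  Real.iSup_nonneg fun _ => norm_nonneg _

theorem tnorm_le {g : Tensor d} {c : ℝ} (h : ∀ σ, ‖g σ‖ ≤ c) (hc : 0 ≤ c) : tnorm g ≤ c :=
  Real.iSup_le h hc

theorem norm_apply_le_tnorm {g : Tensor d} {c : ℝ} (h : ∀ σ, ‖g σ‖ ≤ c) (σ) :
    ‖g σ‖ ≤ tnorm g :=
  le_ciSup ⟨c, by rintro _ ⟨τ, rfl⟩; exact h τ⟩ σ

theorem norm_sub_apply_le_tnorm {A B : Tensor d} {a b : ℝ} (hA : ∀ σ, ‖A σ‖ ≤ a)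
    (hB : ∀ σ, ‖B σ‖ ≤ b) (σ) : ‖A σ - B σ‖ ≤ tnorm (A - B) :=
  norm_apply_le_tnorm (c := a + b)
    (fun τ => (norm_sub_le _ _).trans (add_le_add (hA τ) (hB τ))) σ

theorem contr_sub_left (L : Finset ℕ) (A A' B : Tensor d) :
    contr L (A - A') B = contr L A B - contr L A' B := by
  funext σ
  simp [contr, sub_mul, Finset.sum_sub_distrib]

theorem contr_sub_right (L : Finset ℕ) (A B B' : Tensor d) :
    contr L A (B - B') = contr L A B - contr L A B' := by
  funext σ
  simp [contr, mul_sub, Finset.sum_sub_distrib]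

theorem norm_contr_apply_le (L : Finset ℕ) {A B : Tensor d} {a b : ℝ} (ha : 0 ≤ a)
    (hA : ∀ σ, ‖A σ‖ ≤ a) (hB : ∀ σ, ‖B σ‖ ≤ b) (σ) :
    ‖contr L A B σ‖ ≤ ((d : ℝ) * d) ^ L.card * (a * b) := by
  calc ‖contr L A B σ‖
      ≤ ∑ _τ : ↥L → Fin d × Fin d, a * b :=
        (norm_sum_le _ _).trans <| Finset.sum_le_sum fun τ _ => by
          rw [norm_mul]; exact mul_le_mul (hA _) (hB _) (norm_nonneg _) ha
    _ = ((d : ℝ) * d) ^ L.card * (a * b) := by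
        simp [Finset.sum_const, Fintype.card_prod]

theorem tnorm_contr_sub_le (L : Finset ℕ) {A B gl gr g : Tensor d} {ε : ℝ}
    (hA : ∀ σ, ‖A σ‖ ≤ 1) (hB : ∀ σ, ‖B σ‖ ≤ 1) (hgl : ∀ σ, ‖gl σ‖ ≤ 1)
    (hgr : ∀ σ, ‖gr σ‖ ≤ 1) (hg : ∀ σ, ‖g σ‖ ≤ 1) (hε : tnorm (g - contr L gl gr) ≤ ε) :
    tnorm (contr L A B - g) ≤
      ((d : ℝ) * d) ^ L.card * (tnorm (A - gl) + tnorm (B - gr)) + ε := by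
  have hsplit : contr L A B - g =
      contr L (A - gl) B + contr L gl (B - gr) - (g - contr L gl gr) := by
    rw [contr_sub_left, contr_sub_right]; abel
  have hδl : ∀ σ, ‖(A - gl) σ‖ ≤ tnorm (A - gl) := norm_sub_apply_le_tnorm hA hgl
  have hδr : ∀ σ, ‖(B - gr) σ‖ ≤ tnorm (B - gr) := norm_sub_apply_le_tnorm hB hgr
  have hgε : ∀ σ, ‖(g - contr L gl gr) σ‖ ≤ ε := fun σ =>
    (norm_sub_apply_le_tnorm hg (norm_contr_apply_le L zero_le_one hgl hgr) σ).trans hε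
  have hε0 : 0 ≤ ε := (tnorm_nonneg _).trans hε
  refine tnorm_le (fun σ => ?_)
    (by positivity [tnorm_nonneg (A - gl), tnorm_nonneg (B - gr), hε0])
  rw [hsplit]
  calc ‖(contr L (A - gl) B + contr L gl (B - gr) - (g - contr L gl gr)) σ‖
      ≤ ‖contr L (A - gl) B σ‖ + ‖contr L gl (B - gr) σ‖ + ‖(g - contr L gl gr) σ‖ :=
        (norm_sub_le _ _).trans (add_le_add_left (norm_add_le _ _) _)
    _ ≤ ((d : ℝ) * d) ^ L.card * (tnorm (A - gl) * 1) +
          ((d : ℝ) * d) ^ L.card * (1 * tnorm (B - gr)) + ε := by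
        gcongr
        · exact norm_contr_apply_le L (tnorm_nonneg _) hδl hB σ
        · exact norm_contr_apply_le L zero_le_one hgl hδr σ
        · exact hgε σ
    _ = ((d : ℝ) * d) ^ L.card * (tnorm (A - gl) + tnorm (B - gr)) + ε := by ring

end Tensor

section PartialSim

variable {d m : ℕ} {I : Fin m → Finset ℕ} {Λ : Fin m → Finset (Tensor d)}

theorem isPartialSim_leaf {j : Fin m} {g : Tensor d} (hg : g ∈ Λ j) :
    IsPartialSim I Λ (.leaf j) (fun _ => g) :=
  ⟨fun j' hj' => by simp_all [BTree.subtrees], fun _ _ h => by simp [BTree.subtrees] at h⟩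

theorem IsPartialSim.congr {u : BTree (Fin m)} {lam lam' : BTree (Fin m) → Tensor d}
    (h : IsPartialSim I Λ u lam) (heq : ∀ v ∈ u.subtrees, lam' v = lam v) :
    IsPartialSim I Λ u lam' := by
  refine ⟨fun j hj => heq _ hj ▸ h.1 j hj, fun l r hlr => ?_⟩
  rw [heq _ hlr, heq _ (BTree.left_mem_subtrees_of_node_mem hlr),
    heq _ (BTree.right_mem_subtrees_of_node_mem hlr)]
  exact h.2 l r hlr

/-- Distinct leaves make the two subtrees disjoint, so the glued assignment is well defined. -/
theorem IsPartialSim.node {l r : BTree (Fin m)} {laml lamr : BTree (Fin m) → Tensor d}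
    (hnodup : (BTree.node l r).leaves.Nodup) (hl : IsPartialSim I Λ l laml)
    (hr : IsPartialSim I Λ r lamr) :
    ∃ lam, IsPartialSim I Λ (.node l r) lam ∧
      lam (.node l r) = contr (iota I l ∩ iota I r) (laml l) (lamr r) := by
  classical
  let lam : BTree (Fin m) → Tensor d := fun v =>
    if v ∈ l.subtrees then laml v
    else if v ∈ r.subtrees then lamr v
    else contr (iota I l ∩ iota I r) (laml l) (lamr r)
  have hlam_l : ∀ v ∈ l.subtrees, lam v = laml v := fun v hv => if_pos hv
  have hlam_r : ∀ v ∈ r.subtrees, lam v = lamr v := fun v hv => by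
    simp only [lam, if_neg (fun hv' => BTree.notMem_subtrees_right_of_nodup hnodup hv' hv),
      if_pos hv]
  have hlam_root : lam (.node l r) = contr (iota I l ∩ iota I r) (laml l) (lamr r) := by
    simp only [lam, if_neg (BTree.node_notMem_subtrees_left l r),
      if_neg (BTree.node_notMem_subtrees_right l r)]
  refine ⟨lam, ⟨fun j hj => ?_, fun a b hab => ?_⟩, hlam_root⟩
  · rcases BTree.mem_subtrees_node.1 hj with hj | hj | hj
    · cases hj
    · exact (hl.congr hlam_l).1 j hj
    · exact (hr.congr hlam_r).1 j hj
  · rcases BTree.mem_subtrees_node.1 hab with hab | hab | hab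
    · obtain ⟨rfl, rfl⟩ := BTree.node.inj hab
      rw [hlam_root, hlam_l _ (BTree.self_mem_subtrees a), hlam_r _ (BTree.self_mem_subtrees b)]
    · exact (hl.congr hlam_l).2 a b hab
    · exact (hr.congr hlam_r).2 a b hab

end PartialSim

theorem error_step_le {K ε δl δr : ℝ} {hl hr : ℕ} (hK : 0 ≤ K) (hε : 0 ≤ ε)
    (hδl : δl ≤ ε * (3 * K + 1) ^ hl) (hδr : δr ≤ ε * (3 * K + 1) ^ hr) :
    K * (δl + δr) + ε ≤ ε * (3 * K + 1) ^ (max hl hr + 1) := by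
  have hC : 1 ≤ 3 * K + 1 := by linarith
  have hδl' := hδl.trans <|
    mul_le_mul_of_nonneg_left (pow_le_pow_right₀ hC (le_max_left hl hr)) hε
  have hδr' := hδr.trans <|
    mul_le_mul_of_nonneg_left (pow_le_pow_right₀ hC (le_max_right hl hr)) hε
  have hε' : ε ≤ ε * (3 * K + 1) ^ max hl hr := le_mul_of_one_le_right hε (one_le_pow₀ hC)
  rw [pow_succ]
  nlinarith [mul_le_mul_of_nonneg_left hδl' hK, mul_le_mul_of_nonneg_left hδr' hK]

theorem exists_isPartialSim_tnorm_sub_le {d m : ℕ} (hd : 1 ≤ d) {I : Fin m → Finset ℕ}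
    {T : BTree (Fin m)} (hnodup : T.leaves.Nodup) {Λ : Fin m → Finset (Tensor d)} {ε : ℝ}
    (hε : 0 ≤ ε) {L : BTree (Fin m) → Finset (Tensor d)} (hsim : IsEpsSim I Λ T ε L)
    (hb1 : ∀ u ∈ T.subtrees, ∀ g ∈ L u, ∀ σ, ‖g σ‖ ≤ 1)
    (hb2 : ∀ u ∈ T.subtrees, ∀ lam : BTree (Fin m) → Tensor d,
      IsPartialSim I Λ u lam → ∀ u2 ∈ u.subtrees, ∀ σ, ‖lam u2 σ‖ ≤ 1)
    {u : BTree (Fin m)} (hu : u ∈ T.subtrees) {g : Tensor d} (hg : g ∈ L u) :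
    ∃ lam, IsPartialSim I Λ u lam ∧
      tnorm (lam u - g) ≤ ε * (3 * (d : ℝ) ^ (2 * rankOf I T) + 1) ^ u.height := by
  induction u generalizing g with
  | leaf j =>
    refine ⟨fun _ => g, isPartialSim_leaf (hsim.1 j hu ▸ hg), ?_⟩
    have hbound : 0 ≤ ε * (3 * (d : ℝ) ^ (2 * rankOf I T) + 1) ^ (BTree.leaf j).height := by
      positivity
    exact tnorm_le (fun σ => by simpa using hbound) hbound
  | node l r ihl ihr =>
    have hl := BTree.left_mem_subtrees_of_node_mem hu
    have hr := BTree.right_mem_subtrees_of_node_mem hu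
    obtain ⟨gl, hgl, gr, hgr, hg_near⟩ := (hsim.2 l r hu).1 g hg
    obtain ⟨laml, hpl, hnl⟩ := ihl hl hgl
    obtain ⟨lamr, hpr, hnr⟩ := ihr hr hgr
    obtain ⟨lam, hp, hroot⟩ :=
      hpl.node ((BTree.leaves_sublist_of_mem_subtrees hu).nodup hnodup) hpr
    have hcard : ((d : ℝ) * d) ^ (iota I l ∩ iota I r).card ≤ (d : ℝ) ^ (2 * rankOf I T) := by
      rw [← sq, ← pow_mul]
      refine pow_le_pow_right₀ (by exact_mod_cast hd) (Nat.mul_le_mul_left 2 ?_)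
      exact (Finset.card_le_card Finset.inter_subset_left).trans (card_iota_le_rankOf I hl)
    refine ⟨lam, hp, ?_⟩
    rw [hroot]
    calc tnorm (contr _ (laml l) (lamr r) - g)
        ≤ ((d : ℝ) * d) ^ (iota I l ∩ iota I r).card *
            (tnorm (laml l - gl) + tnorm (lamr r - gr)) + ε :=
          tnorm_contr_sub_le _ (hb2 l hl laml hpl l (BTree.self_mem_subtrees l))
            (hb2 r hr lamr hpr r (BTree.self_mem_subtrees r)) (hb1 l hl gl hgl)
            (hb1 r hr gr hgr) (hb1 _ hu g hg) hg_near
      _ ≤ (d : ℝ) ^ (2 * rankOf I T) * (tnorm (laml l - gl) + tnorm (lamr r - gr)) + ε := by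
          gcongr
          positivity [tnorm_nonneg (laml l - gl), tnorm_nonneg (lamr r - gr)]
      _ ≤ _ := error_step_le (by positivity) hε hnl hnr

theorem statement_12_general
    (d m : ℕ) (hd : 1 ≤ d)
    (I : Fin m → Finset ℕ)
    (T : BTree (Fin m)) (hT : IsContractionTree I T)
    (r : ℕ) (hrank : rankOf I T = r)
    (Λ : Fin m → Finset (Tensor d))
    (ε : ℝ) (hε : 0 < ε)
    (L : BTree (Fin m) → Finset (Tensor d)) (hsim : IsEpsSim I Λ T ε L)
    (hb1 : ∀ u ∈ T.subtrees, ∀ g ∈ L u, ∀ σ, ‖g σ‖ ≤ 1)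
    (hb2 : ∀ u ∈ T.subtrees, ∀ lam : BTree (Fin m) → Tensor d,
      IsPartialSim I Λ u lam → ∀ u2 ∈ u.subtrees, ∀ σ, ‖lam u2 σ‖ ≤ 1) :
    ∀ u ∈ T.subtrees, ∀ g ∈ L u,
      ∃ lam : BTree (Fin m) → Tensor d, IsPartialSim I Λ u lam ∧
        tnorm (lam u - g) ≤ ε * (3 * (d : ℝ) ^ (2 * r) + 1) ^ u.height := by
  subst hrank
  intro u hu g hg
  exact exists_isPartialSim_tnorm_sub_le hd hT.1 hε.le hsim hb1 hb2 hu hg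

/-- Under the stated boundedness assumptions, for every node `u` of
the contraction tree and every tensor `g` of the `ε`-simulation at `u`, some partial
simulation `lam` of `Λ` rooted at `u` satisfies `‖lam u − g‖ ≤ ε·(3d^(2r)+1)^height(u)`. -/
theorem statement_12
    (d m : ℕ) (hd : 1 ≤ d)
    (I : Fin m → Finset ℕ) (hnet : IsAbstractNetwork I)
    (T : BTree (Fin m)) (hT : IsContractionTree I T)
    (r H : ℕ) (hrank : rankOf I T = r) (hheight : T.height = H)
    (Λ : Fin m → Finset (Tensor d))
    (hΛ : ∀ j : Fin m, (Λ j).Nonempty ∧ ∀ g ∈ Λ j, HasIndexSet g (I j))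
    (ε : ℝ) (hε : 0 < ε)
    (L : BTree (Fin m) → Finset (Tensor d)) (hsim : IsEpsSim I Λ T ε L)
    (hidx : ∀ u ∈ T.subtrees, ∀ g ∈ L u, HasIndexSet g (iota I u))
    (hb1 : ∀ u ∈ T.subtrees, ∀ g ∈ L u, ∀ σ, ‖g σ‖ ≤ 1)
    (hb2 : ∀ u ∈ T.subtrees, ∀ lam : BTree (Fin m) → Tensor d,
      IsPartialSim I Λ u lam → ∀ u2 ∈ u.subtrees, ∀ σ, ‖lam u2 σ‖ ≤ 1)
    (hsmall : ε * (3 * (d : ℝ) ^ (2 * r) + 1) ^ H ≤ 1) :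
    ∀ u ∈ T.subtrees, ∀ g ∈ L u,
      ∃ lam : BTree (Fin m) → Tensor d, IsPartialSim I Λ u lam ∧
        tnorm (lam u - g) ≤ ε * (3 * (d : ℝ) ^ (2 * r) + 1) ^ u.height :=
  statement_12_general d m hd I T hT r hrank Λ ε hε L hsim hb1 hb2
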